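/- arXiv:1301.6268 — 2 statements merged into one kernel-verified Lean document; each statement's English description precedes it below -/
import Mathlib

section
/- There exist absolute constants c, C > 0 with the following property. Let A be an n×n matrix with ‖A‖_∞ = max_{i,j} |a_{i,j}| ≤ 1, and let G be an n×n random matrix with i.i.d. standard Gaussian N(0,1) entries. Then for any linear subspaces E, F ⊆ ℝⁿ and any s ≥ 1, P( ‖P_F (A⊙G) restricted to E‖ ≥ c s (√(dim E) + √(dim F)) ) ≤ exp( −C s² (dim E + dim F) ), where P_F is the orthogonal projection onto F and the norm is the operator norm of the map E → ℝⁿ given by x ↦ P_F (A⊙G) x. -/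
open MeasureTheory ProbabilityTheory Matrix Filter
open scoped ENNReal NNReal Classical

noncomputable section

/-- A bipartite graph with left vertices `Fin m` and right vertices `Fin n`,
given by the edge relation `E j i` (`j` a left vertex, `i` a right vertex),
is `(δ, κ)`-broadly connected: every right vertex has degree at least `δ m`,
every left vertex has degree at least `δ n`, and every set `J` of left vertices
has at least `min ((1+κ)|J|) n` broadly connected neighbors, i.e. right
vertices connected to at least `⌊(δ/2)|J|⌋` vertices of `J`. -/
def BroadlyConnected (δ κ : ℝ) {m n : ℕ} (E : Fin m → Fin n → Prop) : Prop :=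
  (∀ i : Fin n, δ * m ≤ (Finset.univ.filter fun j : Fin m => E j i).card) ∧
  (∀ j : Fin m, δ * n ≤ (Finset.univ.filter fun i : Fin n => E j i).card) ∧
  ∀ J : Finset (Fin m),
    min ((1 + κ) * J.card) n ≤
      (Finset.univ.filter fun i : Fin n =>
        ⌊(δ / 2) * (J.card : ℝ)⌋ ≤ ((J.filter fun j => E j i).card : ℤ)).card

/-- `A` is the (0-1) adjacency matrix of a `(δ, κ)`-broadly connected
`n × n` bipartite graph (rows are left vertices). -/
def IsBCAdjacency (δ κ : ℝ) {n : ℕ} (A : Matrix (Fin n) (Fin n) ℝ) : Prop :=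
  (∀ i j, A i j = 0 ∨ A i j = 1) ∧ BroadlyConnected δ κ (fun j i => A j i ≠ 0)

/-- The entries of the random matrix `G` are i.i.d. standard Gaussian `N(0,1)`. -/
def IsStdGaussianMatrix {Ω : Type*} [MeasureSpace Ω] {n m : ℕ}
    (G : Ω → Matrix (Fin n) (Fin m) ℝ) : Prop :=
  iIndepFun (fun p : Fin n × Fin m => fun ω => G ω p.1 p.2) ℙ ∧
  ∀ p : Fin n × Fin m, Measure.map (fun ω => G ω p.1 p.2) ℙ = gaussianReal 0 1

/-- The entries of the random matrix `W` are independent Gaussians,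
`w i j ~ N(B i j, (A i j)^2)`. -/
def IsGaussianMatrix {Ω : Type*} [MeasureSpace Ω] {n m : ℕ}
    (W : Ω → Matrix (Fin n) (Fin m) ℝ) (B A : Matrix (Fin n) (Fin m) ℝ) : Prop :=
  iIndepFun (fun p : Fin n × Fin m => fun ω => W ω p.1 p.2) ℙ ∧
  ∀ p : Fin n × Fin m, Measure.map (fun ω => W ω p.1 p.2) ℙ
    = gaussianReal (B p.1 p.2) ⟨(A p.1 p.2) ^ 2, sq_nonneg _⟩

/-- The `k`-th largest singular value of an `n × m` matrix, via the
Courant–Fischer max-min characterization. -/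
def sVal {n m : ℕ} (W : Matrix (Fin n) (Fin m) ℝ) (k : ℕ) : ℝ :=
  sSup {r : ℝ | 0 ≤ r ∧ ∃ E : Submodule ℝ (EuclideanSpace ℝ (Fin m)),
    Module.finrank ℝ E = k ∧ ∀ x ∈ E, r * ‖x‖ ≤ ‖toEuclideanLin W x‖}

/-- The ℓ₂ → ℓ₂ operator norm of a matrix. -/
def matOpNorm {n m : ℕ} (W : Matrix (Fin n) (Fin m) ℝ) : ℝ :=
  ‖LinearMap.toContinuousLinearMap (toEuclideanLin W)‖

/-- Unit vectors with at most `u * m` nonzero coordinates. -/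
def SparseVec (m : ℕ) (u : ℝ) : Set (EuclideanSpace ℝ (Fin m)) :=
  {x | ‖x‖ = 1 ∧ ((Finset.univ.filter fun j => x j ≠ 0).card : ℝ) ≤ u * m}

/-- Compressible unit vectors: within distance `v` of a `u`-sparse unit vector. -/
def CompVec (m : ℕ) (u v : ℝ) : Set (EuclideanSpace ℝ (Fin m)) :=
  {x | ‖x‖ = 1 ∧ ∃ y ∈ SparseVec m u, ‖x - y‖ ≤ v}

/-- The squared Barvinok–Godsil–Gutman determinant `det(A_{1/2} ⊙ M)^2`. -/
def bggEstimate {n : ℕ} (A M : Matrix (Fin n) (Fin n) ℝ) : ℝ :=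
  ((A.map Real.sqrt).hadamard M).det ^ 2

instance matrixMeasurableSpace {n m : ℕ} : MeasurableSpace (Matrix (Fin n) (Fin m) ℝ) :=
  inferInstanceAs (MeasurableSpace (Fin n → Fin m → ℝ))

/-- The operator norm of `x ↦ P_F (M x)` restricted to the subspace `E`. -/
def projRestrictedNorm {n : ℕ} (F E : Submodule ℝ (EuclideanSpace ℝ (Fin n)))
    (M : Matrix (Fin n) (Fin n) ℝ) : ℝ :=
  sSup {t : ℝ | ∃ x ∈ E, ‖x‖ ≤ 1 ∧ t = ‖(F.orthogonalProjectionOnto (toEuclideanLin M x) : F)‖}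

/-!
Discretize both subspaces: the unit ball of a `d`-dimensional space has a `1/4`-net of at most
`9 ^ d` points (volume comparison of disjoint balls), and the norm of a map `T : E → F` is at most
twice the largest `⟪T x, y⟫` over net points `x`, `y`. For fixed `x ∈ E`, `y ∈ F` the form
`⟪(A ⊙ G) x, y⟫ = ∑ yᵢ aᵢⱼ xⱼ gᵢⱼ` is a Gaussian combination whose coefficients have `ℓ²` norm at
most `1` because `|aᵢⱼ| ≤ 1`, so it exceeds `t` with probability at most `exp (-t² / 2)`. A union
bound over the `9 ^ (dim E + dim F)` pairs of net points gives the claim with `c = 8`, `C = 1`.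
-/

open Metric Module Real
open scoped RealInnerProductSpace

namespace ProbabilityTheory

variable {Ω : Type*} {mΩ : MeasurableSpace Ω} {μ : Measure Ω} {X : Ω → ℝ} {c d : ℝ≥0}

lemma HasSubgaussianMGF.mono (h : HasSubgaussianMGF X c μ) (hcd : c ≤ d) :
    HasSubgaussianMGF X d μ where
  integrable_exp_mul := h.integrable_exp_mul
  mgf_le t := (h.mgf_le t).trans <| exp_le_exp.mpr <| by gcongr

lemma hasSubgaussianMGF_of_map_eq_gaussianReal {v : ℝ≥0} (hX : μ.map X = gaussianReal 0 v) :
    HasSubgaussianMGF X v μ where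
  integrable_exp_mul t := by
    have hXm : AEMeasurable X μ := aemeasurable_of_map_neZero (by rw [hX]; infer_instance)
    exact (integrable_map_measure (by fun_prop) hXm).mp (hX ▸ integrable_exp_mul_gaussianReal t)
  mgf_le t := by rw [mgf_gaussianReal hX, zero_mul, zero_add]

lemma measureReal_sum_mul_ge_le_of_iIndepFun {ι : Type*} [Fintype ι] {X : ι → Ω → ℝ}
    (h_indep : iIndepFun X μ) (h_law : ∀ i, μ.map (X i) = gaussianReal 0 1)
    {a : ι → ℝ} (ha : ∑ i, a i ^ 2 ≤ 1) {t : ℝ} (ht : 0 ≤ t) :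
    μ.real {ω | t ≤ ∑ i, a i * X i ω} ≤ exp (-t ^ 2 / 2) := by
  have h_subG : HasSubgaussianMGF (fun ω => ∑ i, a i * X i ω) (∑ i, ‖a i‖₊ ^ 2) μ := by
    refine HasSubgaussianMGF.sum_of_iIndepFun
      (h_indep.comp (fun i x => a i * x) fun i => measurable_const_mul (a i)) fun i _ => ?_
    exact ((hasSubgaussianMGF_of_map_eq_gaussianReal (h_law i)).const_mul (a i)).mono
      (le_of_eq <| NNReal.eq <| by change a i ^ 2 * 1 = _; simp)
  simpa using (h_subG.mono (d := 1) (by rw [← NNReal.coe_le_coe]; simpa using ha)).measure_ge_le ht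

end ProbabilityTheory

section Nets

variable {V : Type*} [NormedAddCommGroup V] [NormedSpace ℝ V] [FiniteDimensional ℝ V] {ε : ℝ≥0}

theorem Metric.IsSeparated.card_le_of_subset_closedBall (hε : 0 < ε) {C : Finset V}
    (hC : (C : Set V) ⊆ closedBall 0 1) (hsep : IsSeparated (ε : ℝ≥0∞) (C : Set V)) :
    (C.card : ℝ) ≤ (1 + 2 / ε) ^ finrank ℝ V := by
  borelize V
  set μ : Measure V := Measure.addHaar
  set r : ℝ := ε / 2 with hr_def
  have hr : 0 < r := by positivity
  have hdisj : (C : Set V).PairwiseDisjoint fun x => ball x r := by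
    intro x hx y hy hxy
    refine ball_disjoint_ball ?_
    have h : (ε : ℝ≥0∞) < edist x y := hsep hx hy hxy
    rw [edist_nndist, ENNReal.coe_lt_coe, ← NNReal.coe_lt_coe, coe_nndist] at h
    linarith
  have hsub : ⋃ x ∈ C, ball x r ⊆ ball 0 (1 + r) := by
    refine Set.iUnion₂_subset fun x hx => ball_subset_ball' ?_
    have := hC hx
    rw [mem_closedBall] at this
    linarith
  have hvol : (C.card : ℝ≥0∞) * ENNReal.ofReal (r ^ finrank ℝ V) * μ (ball 0 1)
      ≤ ENNReal.ofReal ((1 + r) ^ finrank ℝ V) * μ (ball 0 1) := calc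
    _ = ∑ x ∈ C, μ (ball x r) := by simp [Measure.addHaar_ball_of_pos μ _ hr, mul_assoc]
    _ = μ (⋃ x ∈ C, ball x r) := (measure_biUnion_finset hdisj fun _ _ => measurableSet_ball).symm
    _ ≤ μ (ball 0 (1 + r)) := measure_mono hsub
    _ = _ := Measure.addHaar_ball_of_pos μ _ (by positivity)
  rw [ENNReal.mul_le_mul_iff_left (measure_ball_pos μ _ one_pos).ne' measure_ball_lt_top.ne,
    ← ENNReal.ofReal_natCast, ← ENNReal.ofReal_mul (by positivity),
    ENNReal.ofReal_le_ofReal_iff (by positivity)] at hvol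
  have h2ε : 1 + 2 / (ε : ℝ) = (1 + r) / r := by rw [hr_def]; field_simp; ring
  rw [h2ε, div_pow, le_div_iff₀ (by positivity)]
  exact hvol

theorem Metric.packingNumber_closedBall_ne_top (hε : 0 < ε) :
    packingNumber ε (closedBall (0 : V) 1) ≠ ⊤ := by
  set B : ℕ := ⌊(1 + 2 / (ε : ℝ)) ^ finrank ℝ V⌋₊
  refine ne_top_of_le_ne_top (ENat.natCast_ne_top B) (iSup₂_le fun C hC => iSup_le fun hsep => ?_)
  by_contra! hlt
  obtain ⟨t, htC, ht⟩ :=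
    Set.exists_subset_encard_eq ((ENat.add_one_le_iff (ENat.natCast_ne_top B)).mpr hlt)
  have htfin : t.Finite := Set.finite_of_encard_eq_coe (k := B + 1) (by rw [ht]; push_cast; rfl)
  have hcard := IsSeparated.card_le_of_subset_closedBall hε (C := htfin.toFinset)
    (by simpa using htC.trans hC) (by simpa using hsep.subset htC)
  rw [htfin.encard_eq_coe_toFinset_card] at ht
  have : htfin.toFinset.card = B + 1 := by exact_mod_cast ht
  rw [this, Nat.cast_add_one] at hcard
  exact (Nat.lt_floor_add_one _).not_ge hcard

theorem Metric.exists_finset_isCover_closedBall (hε : 0 < ε) :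
    ∃ N : Finset V, (N : Set V) ⊆ closedBall 0 1 ∧ IsCover ε (closedBall 0 1) (N : Set V) ∧
      (N.card : ℝ) ≤ (1 + 2 / ε) ^ finrank ℝ V := by
  have h := packingNumber_closedBall_ne_top (V := V) hε
  have hfin : (maximalSeparatedSet ε (closedBall (0 : V) 1)).Finite :=
    Set.encard_ne_top_iff.mp (by rwa [encard_maximalSeparatedSet h])
  refine ⟨hfin.toFinset, by simpa using maximalSeparatedSet_subset, by
    simpa using isCover_maximalSeparatedSet h, ?_⟩
  exact IsSeparated.card_le_of_subset_closedBall hε (by simpa using maximalSeparatedSet_subset)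
    (by simpa using isSeparated_maximalSeparatedSet)

end Nets

namespace ContinuousLinearMap

variable {E F : Type*} [NormedAddCommGroup E] [InnerProductSpace ℝ E]
  [NormedAddCommGroup F] [InnerProductSpace ℝ F] (T : E →L[ℝ] F) {ε : ℝ≥0} {NE : Set E} {NF : Set F}

lemma inner_le_add_of_isCover (hNE : NE ⊆ closedBall 0 1)
    (hcovE : IsCover ε (closedBall 0 1) NE) (hcovF : IsCover ε (closedBall 0 1) NF) {m : ℝ}
    (hm : ∀ x ∈ NE, ∀ y ∈ NF, ⟪T x, y⟫ ≤ m) {x : E} {y : F} (hx : ‖x‖ ≤ 1) (hy : ‖y‖ ≤ 1) :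
    ⟪T x, y⟫ ≤ m + 2 * ε * ‖T‖ := by
  obtain ⟨x₀, hx₀, hxx₀⟩ : ∃ x₀ ∈ NE, dist x x₀ ≤ ε := by
    simpa using hcovE.subset_iUnion_closedBall (mem_closedBall_zero_iff.mpr hx)
  obtain ⟨y₀, hy₀, hyy₀⟩ : ∃ y₀ ∈ NF, dist y y₀ ≤ ε := by
    simpa using hcovF.subset_iUnion_closedBall (mem_closedBall_zero_iff.mpr hy)
  have hx₀1 : ‖x₀‖ ≤ 1 := mem_closedBall_zero_iff.mp (hNE hx₀)
  have h_split : ⟪T x, y⟫ = ⟪T x₀, y₀⟫ + ⟪T (x - x₀), y⟫ + ⟪T x₀, y - y₀⟫ := by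
    rw [map_sub, inner_sub_left, inner_sub_right]; ring
  have h_near_x : ⟪T (x - x₀), y⟫ ≤ ε * ‖T‖ := calc
    _ ≤ ‖T (x - x₀)‖ * ‖y‖ := real_inner_le_norm _ _
    _ ≤ ‖T‖ * ‖x - x₀‖ * 1 := by gcongr; exact T.le_opNorm _
    _ ≤ ε * ‖T‖ := by rw [← dist_eq_norm]; nlinarith [norm_nonneg T]
  have h_near_y : ⟪T x₀, y - y₀⟫ ≤ ε * ‖T‖ := calc
    _ ≤ ‖T x₀‖ * ‖y - y₀‖ := real_inner_le_norm _ _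
    _ ≤ ‖T‖ * 1 * ε := by gcongr; exact T.le_opNorm_of_le hx₀1; rwa [← dist_eq_norm]
    _ = ε * ‖T‖ := by ring
  linarith [hm x₀ hx₀ y₀ hy₀]

theorem exists_le_inner_of_isCover {NE : Finset E} {NF : Finset F}
    (hNE : (NE : Set E) ⊆ closedBall 0 1) (hcovE : IsCover ε (closedBall 0 1) (NE : Set E))
    (hcovF : IsCover ε (closedBall 0 1) (NF : Set F)) :
    ∃ x ∈ NE, ∃ y ∈ NF, (1 - 2 * ε) * ‖T‖ ≤ ⟪T x, y⟫ := by
  have hne : (NE ×ˢ NF).Nonempty := by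
    refine Finset.Nonempty.product ?_ ?_
    · simpa using hcovE.nonempty ⟨0, by simp⟩
    · simpa using hcovF.nonempty ⟨0, by simp⟩
  obtain ⟨⟨x₀, y₀⟩, hp, hmax⟩ := (NE ×ˢ NF).exists_max_image (fun p => ⟪T p.1, p.2⟫) hne
  obtain ⟨hx₀, hy₀⟩ := Finset.mem_product.mp hp
  have hm : ∀ x ∈ (NE : Set E), ∀ y ∈ (NF : Set F), ⟪T x, y⟫ ≤ ⟪T x₀, y₀⟫ :=
    fun x hx y hy => hmax (x, y) (Finset.mem_product.mpr ⟨hx, hy⟩)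
  have hbound x y (hx : ‖x‖ ≤ 1) (hy : ‖y‖ ≤ 1) :=
    T.inner_le_add_of_isCover hNE hcovE hcovF hm hx hy
  have hT : ‖T‖ ≤ ⟪T x₀, y₀⟫ + 2 * ε * ‖T‖ :=
    T.opNorm_le_of_re_inner_le (by simpa using hbound 0 0 (by simp) (by simp))
      fun x y hx hy => hbound x y hx.le hy.le
  exact ⟨x₀, hx₀, y₀, hy₀, by linarith⟩

end ContinuousLinearMap

namespace Matrix

variable {m n : Type*} [Fintype m] [Fintype n]

lemma inner_toEuclideanLin_eq_sum [DecidableEq n] (M : Matrix m n ℝ) (x : EuclideanSpace ℝ n)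
    (y : EuclideanSpace ℝ m) :
    ⟪toEuclideanLin M x, y⟫ = ∑ q : m × n, y q.1 * M q.1 q.2 * x q.2 := by
  simp only [PiLp.inner_apply, ofLp_toLpLin, toLin'_apply, mulVec, dotProduct,
    RCLike.inner_apply, conj_trivial, Fintype.sum_prod_type, Finset.mul_sum]
  exact Finset.sum_congr rfl fun i _ => Finset.sum_congr rfl fun j _ => by ring

lemma sum_sq_mul_mul_le_of_abs_le_one {A : Matrix m n ℝ} (hA : ∀ i j, |A i j| ≤ 1)
    (x : EuclideanSpace ℝ n) (y : EuclideanSpace ℝ m) :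
    ∑ q : m × n, (y q.1 * A q.1 q.2 * x q.2) ^ 2 ≤ ‖y‖ ^ 2 * ‖x‖ ^ 2 := calc
  _ ≤ ∑ q : m × n, y q.1 ^ 2 * x q.2 ^ 2 := Finset.sum_le_sum fun q _ => by
    rw [mul_pow, mul_pow]
    have : A q.1 q.2 ^ 2 ≤ 1 := by rw [← sq_abs]; exact pow_le_one₀ (abs_nonneg _) (hA _ _)
    nlinarith [mul_nonneg (sq_nonneg (y q.1)) (sq_nonneg (x q.2))]
  _ = ‖y‖ ^ 2 * ‖x‖ ^ 2 := by
    rw [Fintype.sum_prod_type, EuclideanSpace.norm_sq_eq, EuclideanSpace.norm_sq_eq,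
      Finset.sum_mul_sum]
    simp

end Matrix

section ProjRestricted

variable {n : ℕ} (F E : Submodule ℝ (EuclideanSpace ℝ (Fin n))) (M : Matrix (Fin n) (Fin n) ℝ)

def projRestrictedCLM : E →L[ℝ] F :=
  F.orthogonalProjectionOnto ∘L LinearMap.toContinuousLinearMap (toEuclideanLin M) ∘L E.subtypeL

lemma inner_projRestrictedCLM (x : E) (y : F) :
    ⟪projRestrictedCLM F E M x, y⟫ = ⟪toEuclideanLin M x, y⟫ := by
  simp [projRestrictedCLM]

lemma projRestrictedNorm_le_norm_projRestrictedCLM :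
    projRestrictedNorm F E M ≤ ‖projRestrictedCLM F E M‖ := by
  refine csSup_le ⟨_, 0, E.zero_mem, by simp, rfl⟩ ?_
  rintro t ⟨x, hx, hx1, rfl⟩
  exact ((projRestrictedCLM F E M).le_opNorm_of_le (x := ⟨x, hx⟩) hx1).trans_eq (mul_one _)

variable {F E M} in
lemma exists_le_inner_of_two_mul_le_projRestrictedNorm {NE : Finset E} {NF : Finset F}
    (hNE : (NE : Set E) ⊆ closedBall 0 1) (hcovE : IsCover 4⁻¹ (closedBall 0 1) (NE : Set E))
    (hcovF : IsCover 4⁻¹ (closedBall 0 1) (NF : Set F)) {t : ℝ}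
    (h : 2 * t ≤ projRestrictedNorm F E M) :
    ∃ x ∈ NE, ∃ y ∈ NF, t ≤ ⟪toEuclideanLin M x, y⟫ := by
  obtain ⟨x, hx, y, hy, hxy⟩ :=
    (projRestrictedCLM F E M).exists_le_inner_of_isCover hNE hcovE hcovF
  rw [inner_projRestrictedCLM] at hxy
  have := projRestrictedNorm_le_norm_projRestrictedCLM F E M
  norm_num at hxy
  exact ⟨x, hx, y, hy, by linarith⟩

end ProjRestricted

theorem measure_le_inner_toEuclideanLin_hadamard_le {n m : ℕ} {Ω : Type*} [MeasureSpace Ω]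
    {A : Matrix (Fin n) (Fin m) ℝ} (hA : ∀ i j, |A i j| ≤ 1) {G : Ω → Matrix (Fin n) (Fin m) ℝ}
    (hG : IsStdGaussianMatrix G) {x : EuclideanSpace ℝ (Fin m)} {y : EuclideanSpace ℝ (Fin n)}
    (hx : ‖x‖ ≤ 1) (hy : ‖y‖ ≤ 1) {t : ℝ} (ht : 0 ≤ t) :
    ℙ {ω | t ≤ ⟪toEuclideanLin (A.hadamard (G ω)) x, y⟫} ≤ ENNReal.ofReal (exp (-t ^ 2 / 2)) := by
  have := hG.1.isProbabilityMeasure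
  have hcoeff : ∑ q : Fin n × Fin m, (y q.1 * A q.1 q.2 * x q.2) ^ 2 ≤ 1 :=
    (Matrix.sum_sq_mul_mul_le_of_abs_le_one hA x y).trans <|
      mul_le_one₀ (pow_le_one₀ (norm_nonneg _) hy) (by positivity) (pow_le_one₀ (norm_nonneg _) hx)
  have hset : {ω | t ≤ ⟪toEuclideanLin (A.hadamard (G ω)) x, y⟫}
      = {ω | t ≤ ∑ q : Fin n × Fin m, y q.1 * A q.1 q.2 * x q.2 * G ω q.1 q.2} := by
    ext ω
    simp only [Set.mem_ofPred_eq, Matrix.inner_toEuclideanLin_eq_sum, Matrix.hadamard_apply]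
    exact iff_of_eq (congrArg _ (Finset.sum_congr rfl fun q _ => by ring))
  rw [hset, ← ofReal_measureReal]
  exact ENNReal.ofReal_le_ofReal (measureReal_sum_mul_ge_le_of_iIndepFun hG.1 hG.2 hcoeff ht)

theorem measure_le_projRestrictedNorm_hadamard_le {n : ℕ} {Ω : Type*} [MeasureSpace Ω]
    {A : Matrix (Fin n) (Fin n) ℝ} (hA : ∀ i j, |A i j| ≤ 1) {G : Ω → Matrix (Fin n) (Fin n) ℝ}
    (hG : IsStdGaussianMatrix G) (E F : Submodule ℝ (EuclideanSpace ℝ (Fin n))) {t : ℝ}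
    (ht : 0 ≤ t) :
    ℙ {ω | 2 * t ≤ projRestrictedNorm F E (A.hadamard (G ω))}
      ≤ ENNReal.ofReal (9 ^ (finrank ℝ E + finrank ℝ F) * exp (-t ^ 2 / 2)) := by
  obtain ⟨NE, hNE, hcovE, hcardE⟩ :=
    exists_finset_isCover_closedBall (V := E) (ε := 4⁻¹) (by norm_num)
  obtain ⟨NF, hNF, hcovF, hcardF⟩ :=
    exists_finset_isCover_closedBall (V := F) (ε := 4⁻¹) (by norm_num)
  have hsub : {ω | 2 * t ≤ projRestrictedNorm F E (A.hadamard (G ω))}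
      ⊆ ⋃ p ∈ NE ×ˢ NF, {ω | t ≤ ⟪toEuclideanLin (A.hadamard (G ω)) p.1, p.2⟫} := fun ω hω => by
    obtain ⟨x, hx, y, hy, hxy⟩ :=
      exists_le_inner_of_two_mul_le_projRestrictedNorm hNE hcovE hcovF hω
    exact Set.mem_biUnion (x := (x, y)) (by simpa using ⟨hx, hy⟩) hxy
  have htail : ∀ p ∈ NE ×ˢ NF, ℙ {ω | t ≤ ⟪toEuclideanLin (A.hadamard (G ω)) p.1, p.2⟫}
      ≤ ENNReal.ofReal (exp (-t ^ 2 / 2)) := fun p hp => by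
    obtain ⟨hx, hy⟩ := Finset.mem_product.mp hp
    exact measure_le_inner_toEuclideanLin_hadamard_le hA hG (by simpa using hNE hx)
      (by simpa using hNF hy) ht
  have hcard : ((NE ×ˢ NF).card : ℝ) ≤ 9 ^ (finrank ℝ E + finrank ℝ F) := by
    rw [Finset.card_product, Nat.cast_mul, pow_add]
    norm_num at hcardE hcardF
    gcongr
  calc ℙ {ω | 2 * t ≤ projRestrictedNorm F E (A.hadamard (G ω))}
      ≤ ∑ p ∈ NE ×ˢ NF, ℙ {ω | t ≤ ⟪toEuclideanLin (A.hadamard (G ω)) p.1, p.2⟫} :=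
        (measure_mono hsub).trans (measure_biUnion_finset_le _ _)
    _ ≤ ∑ p ∈ NE ×ˢ NF, ENNReal.ofReal (exp (-t ^ 2 / 2)) := Finset.sum_le_sum htail
    _ = ENNReal.ofReal ((NE ×ˢ NF).card * exp (-t ^ 2 / 2)) := by
        rw [Finset.sum_const, nsmul_eq_mul, ENNReal.ofReal_mul (by positivity),
          ENNReal.ofReal_natCast]
    _ ≤ _ := ENNReal.ofReal_le_ofReal (by gcongr)

lemma nine_pow_mul_exp_le {k l : ℕ} {s : ℝ} (hs : 1 ≤ s) :
    9 ^ (k + l) * exp (-(4 * s * (√k + √l)) ^ 2 / 2) ≤ exp (-1 * s ^ 2 * (k + l)) := by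
  have h9 : (9 : ℝ) ^ (k + l) ≤ exp (4 * (k + l)) := by
    have : (9 : ℝ) ≤ exp 4 := calc
      (9 : ℝ) ≤ (1 + 1) ^ 4 := by norm_num
      _ ≤ exp 1 ^ 4 := by gcongr; exact add_one_le_exp 1
      _ = exp 4 := by rw [← exp_nat_mul]; norm_num
    calc (9 : ℝ) ^ (k + l) ≤ exp 4 ^ (k + l) := by gcongr
      _ = exp (4 * (k + l)) := by rw [← exp_nat_mul]; push_cast; ring_nf
  have hsqrt : (k : ℝ) + l ≤ (√k + √l) ^ 2 := by
    have := mul_nonneg (sqrt_nonneg (k : ℝ)) (sqrt_nonneg (l : ℝ))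
    nlinarith [sq_sqrt (Nat.cast_nonneg k : (0 : ℝ) ≤ k), sq_sqrt (Nat.cast_nonneg l : (0 : ℝ) ≤ l)]
  have hkl : (0 : ℝ) ≤ k + l := by positivity
  calc 9 ^ (k + l) * exp (-(4 * s * (√k + √l)) ^ 2 / 2)
      ≤ exp (4 * (k + l)) * exp (-(8 * s ^ 2 * (k + l))) := by
        gcongr
        nlinarith [sq_nonneg s]
    _ ≤ exp (-1 * s ^ 2 * (k + l)) := by
        rw [← exp_add]
        gcongr
        nlinarith [mul_le_mul_of_nonneg_left (one_le_pow₀ hs : 1 ≤ s ^ 2) hkl]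

/-- Lemma (norm of a Gaussian matrix with bounded entries restricted to
subspaces): with ‖A‖_∞ ≤ 1 and `G` standard Gaussian,
`‖P_F (A ⊙ G) : E → ℝⁿ‖ ≤ c s (√dim E + √dim F)` except with probability
`exp(-C s² (dim E + dim F))`. -/
theorem subspace_norm_gaussian :
    ∃ c C : ℝ, 0 < c ∧ 0 < C ∧
      ∀ (n : ℕ) (Ω : Type) [MeasureSpace Ω], IsProbabilityMeasure (ℙ : Measure Ω) →
      ∀ (A : Matrix (Fin n) (Fin n) ℝ), (∀ i j, |A i j| ≤ 1) →
      ∀ (G : Ω → Matrix (Fin n) (Fin n) ℝ), IsStdGaussianMatrix G →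
      ∀ (E F : Submodule ℝ (EuclideanSpace ℝ (Fin n))) (s : ℝ), 1 ≤ s →
        ℙ {ω : Ω | c * s * (Real.sqrt (Module.finrank ℝ E) + Real.sqrt (Module.finrank ℝ F))
              ≤ projRestrictedNorm F E (A.hadamard (G ω))}
          ≤ ENNReal.ofReal
              (Real.exp (-C * s ^ 2 * ((Module.finrank ℝ E : ℝ) + Module.finrank ℝ F))) := by
  refine ⟨8, 1, by norm_num, by norm_num, fun n Ω _ _ A hA G hG E F s hs => ?_⟩
  set t := 4 * s * (Real.sqrt (finrank ℝ E) + Real.sqrt (finrank ℝ F))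
  have hthreshold : 8 * s * (Real.sqrt (finrank ℝ E) + Real.sqrt (finrank ℝ F)) = 2 * t := by ring
  rw [hthreshold]
  refine (measure_le_projRestrictedNorm_hadamard_le hA hG E F (by positivity)).trans ?_
  exact ENNReal.ofReal_le_ofReal (nine_pow_mul_exp_le hs)
end
end

section
/- Let A = (a_{i,j}) be an n×n matrix such that: (1) a_{i,j} ∈ {0} ∪ [r,1] for some constant r > 0 and all i,j; (2) every column j ∈ [n] of A has at least δn nonzero entries. Then for every subset J ⊆ [n] there exists a subset I ⊆ [n] of cardinality |I| ≥ (r²δ/2) n such that for every i ∈ I: Σ_{j∈J} a_{i,j}² ≥ (r²δ/2)·|J|. -/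
/-! Each column of the entrywise square `A ∘ A` has sum at least `r²δn`, so the rows of `A ∘ A`
restricted to `J` carry total mass at least `r²δn|J|`. By a reverse Markov argument: each row
carries at most `|J|`, and the rows below the threshold `(r²δ/2)|J|` carry at most `(r²δ/2)n|J|`
together, so at least `(r²δ/2)n` rows lie above it. -/

open MeasureTheory ProbabilityTheory Matrix Filter
open scoped ENNReal NNReal Classical

noncomputable section

open Finset

namespace Finset

variable {ι : Type*} (s : Finset ι) (f : ι → ℝ)

theorem card_filter_mul_le_sum (p : ι → Prop) [DecidablePred p] {a : ℝ}
    (hf : ∀ i ∈ s, 0 ≤ f i) (hpf : ∀ i ∈ s, p i → a ≤ f i) :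
    #(s.filter p) * a ≤ ∑ i ∈ s, f i :=
  calc #(s.filter p) * a ≤ ∑ i ∈ s.filter p, f i := by
        simpa [nsmul_eq_mul] using
          card_nsmul_le_sum _ _ a fun i hi => hpf i (mem_filter.1 hi).1 (mem_filter.1 hi).2
    _ ≤ ∑ i ∈ s, f i :=
        sum_le_sum_of_subset_of_nonneg (filter_subset _ _) fun i hi _ => hf i hi

theorem sum_le_card_filter_le_mul_add {M t : ℝ} (ht : 0 ≤ t) (hfM : ∀ i ∈ s, f i ≤ M) :
    ∑ i ∈ s, f i ≤ #(s.filter fun i => t ≤ f i) * M + #s * t := by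
  rw [← sum_filter_add_sum_filter_not s fun i => t ≤ f i]
  gcongr
  · simpa [nsmul_eq_mul] using
      sum_le_card_nsmul _ _ M fun i hi => hfM i (mem_filter.1 hi).1
  · calc ∑ i ∈ s.filter fun i => ¬t ≤ f i, f i
        ≤ #(s.filter fun i => ¬t ≤ f i) * t := by
          simpa [nsmul_eq_mul] using
            sum_le_card_nsmul _ _ t fun i hi => (not_le.1 (mem_filter.1 hi).2).le
      _ ≤ #s * t := by gcongr; exact filter_subset _ _

end Finset

section DenseRows

variable {n : ℕ} {r δ : ℝ} {A : Matrix (Fin n) (Fin n) ℝ}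

theorem sq_entry_le_one (hr : 0 ≤ r) (h1 : ∀ i j, A i j = 0 ∨ (r ≤ A i j ∧ A i j ≤ 1)) (i j : Fin n) :
    A i j ^ 2 ≤ 1 := by
  rcases h1 i j with h | ⟨hrA, hA1⟩ <;> nlinarith

theorem sq_le_sq_entry (hr : 0 ≤ r) (h1 : ∀ i j, A i j = 0 ∨ (r ≤ A i j ∧ A i j ≤ 1))
    {i j : Fin n} (hA : A i j ≠ 0) : r ^ 2 ≤ A i j ^ 2 := by
  rcases h1 i j with h | ⟨hrA, -⟩
  · exact absurd h hA
  · exact pow_le_pow_left₀ hr hrA 2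

theorem mul_le_sum_sq_col (hr : 0 ≤ r) (h1 : ∀ i j, A i j = 0 ∨ (r ≤ A i j ∧ A i j ≤ 1))
    (h2 : ∀ j : Fin n, δ * n ≤ #(univ.filter fun i : Fin n => A i j ≠ 0)) (j : Fin n) :
    r ^ 2 * δ * n ≤ ∑ i, A i j ^ 2 :=
  calc r ^ 2 * δ * n = r ^ 2 * (δ * n) := by ring
    _ ≤ r ^ 2 * #(univ.filter fun i : Fin n => A i j ≠ 0) := by gcongr; exact h2 j
    _ ≤ ∑ i, A i j ^ 2 := by
        rw [mul_comm]
        exact card_filter_mul_le_sum _ _ _ (fun i _ => sq_nonneg _)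
          fun i _ hA => sq_le_sq_entry hr h1 hA

theorem card_mul_le_sum_sq_rows (hr : 0 ≤ r) (h1 : ∀ i j, A i j = 0 ∨ (r ≤ A i j ∧ A i j ≤ 1))
    (h2 : ∀ j : Fin n, δ * n ≤ #(univ.filter fun i : Fin n => A i j ≠ 0)) (J : Finset (Fin n)) :
    #J * (r ^ 2 * δ * n) ≤ ∑ i, ∑ j ∈ J, A i j ^ 2 := by
  rw [sum_comm]
  simpa using card_nsmul_le_sum J _ _ fun j _ => mul_le_sum_sq_col hr h1 h2 j

theorem sq_mul_mul_le (hr : 0 ≤ r) (h1 : ∀ i j, A i j = 0 ∨ (r ≤ A i j ∧ A i j ≤ 1))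
    (h2 : ∀ j : Fin n, δ * n ≤ #(univ.filter fun i : Fin n => A i j ≠ 0)) :
    r ^ 2 * δ * n ≤ n := by
  rcases n.eq_zero_or_pos with rfl | hn
  · simp
  calc r ^ 2 * δ * n ≤ ∑ i, A i ⟨0, hn⟩ ^ 2 := mul_le_sum_sq_col hr h1 h2 _
    _ ≤ n := by simpa using sum_le_sum fun i (_ : i ∈ univ) => sq_entry_le_one hr h1 i ⟨0, hn⟩

end DenseRows

/-- Lemma (dense subset of rows): if `A` has entries in `{0} ∪ [r,1]` and every
column has at least `δ n` nonzero entries, then for every `J ⊆ [n]` there is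
`I ⊆ [n]` with `|I| ≥ (r²δ/2) n` such that `∑_{j ∈ J} a_{i,j}² ≥ (r²δ/2)|J|`
for every `i ∈ I`. -/
theorem dense_subset_of_rows (n : ℕ) (r δ : ℝ) (hr : 0 < r) (hδ : 0 < δ)
    (A : Matrix (Fin n) (Fin n) ℝ)
    (h1 : ∀ i j, A i j = 0 ∨ (r ≤ A i j ∧ A i j ≤ 1))
    (h2 : ∀ j : Fin n, δ * n ≤ (Finset.univ.filter fun i : Fin n => A i j ≠ 0).card) :
    ∀ J : Finset (Fin n), ∃ I : Finset (Fin n),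
      r ^ 2 * δ / 2 * n ≤ I.card ∧
      ∀ i ∈ I, r ^ 2 * δ / 2 * J.card ≤ ∑ j ∈ J, A i j ^ 2 := by
  intro J
  refine ⟨univ.filter fun i => r ^ 2 * δ / 2 * #J ≤ ∑ j ∈ J, A i j ^ 2, ?_,
    fun i hi => (mem_filter.1 hi).2⟩
  rcases J.eq_empty_or_nonempty with rfl | hJ
  · simp only [card_empty, Nat.cast_zero, mul_zero, sum_empty, le_refl, filter_true, card_univ,
      Fintype.card_fin]
    linarith [sq_mul_mul_le hr.le h1 h2]
  have hrow (i : Fin n) : ∑ j ∈ J, A i j ^ 2 ≤ #J := by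
    simpa using sum_le_sum fun j (_ : j ∈ J) => sq_entry_le_one hr.le h1 i j
  have hmarkov := sum_le_card_filter_le_mul_add univ (fun i => ∑ j ∈ J, A i j ^ 2)
    (by positivity : 0 ≤ r ^ 2 * δ / 2 * #J) fun i _ => hrow i
  rw [card_univ, Fintype.card_fin] at hmarkov
  have hmass := card_mul_le_sum_sq_rows hr.le h1 h2 J
  refine le_of_mul_le_mul_right ?_ (by exact_mod_cast hJ.card_pos : (0 : ℝ) < #J)
  linarith
end
end
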